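/- (Uniqueness of exponentiation for base at least 1) Let x be a real number with x ≥ 1, and let f : ℝ → ℝ be a monotone function satisfying f(ζ + ζ') = f(ζ) · f(ζ') for all reals ζ, ζ', and f(1) = x. Then f(ζ) = x^ζ for every real ζ. -/
import Mathlib

theorem rpow_unique_monotone_hom (x : ℝ) (hx : 1 ≤ x) (f : ℝ → ℝ)
    (hmono : Monotone f)
    (hmul : ∀ ζ ζ' : ℝ, f (ζ + ζ') = f ζ * f ζ')
    (hone : f 1 = x) :
    ∀ ζ : ℝ, f ζ = x ^ ζ := by
  have hx0 : (0:ℝ) < x := lt_of_lt_of_le one_pos hx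
  -- f 0 = 1
  have hf0 : f 0 = 1 := by
    have h := hmul 1 0
    rw [add_zero, hone] at h
    field_simp at h
    linarith [h]
  -- f is positive everywhere
  have hpos : ∀ ζ, 0 < f ζ := by
    intro ζ
    have hsq : f ζ = f (ζ/2) * f (ζ/2) := by
      have := hmul (ζ/2) (ζ/2); rw [← this]; ring_nf
    have hne : f ζ ≠ 0 := by
      intro h0
      have h := hmul ζ (-ζ)
      rw [add_neg_cancel, hf0, h0, zero_mul] at h
      exact one_ne_zero h
    have : 0 ≤ f ζ := hsq ▸ mul_self_nonneg _
    exact lt_of_le_of_ne this (Ne.symm hne)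
  -- g = log ∘ f
  set g : ℝ → ℝ := fun ζ => Real.log (f ζ) with hg
  have gadd : ∀ a b, g (a + b) = g a + g b := fun a b => by
    simp only [hg, hmul a b, Real.log_mul (hpos a).ne' (hpos b).ne']
  have gmono : Monotone g := fun a b hab =>
    Real.log_le_log (hpos a) (hmono hab)
  set c : ℝ := Real.log x with hc
  have hc0 : 0 ≤ c := Real.log_nonneg hx
  have g1 : g 1 = c := by simp [hg, hone, hc]
  -- g on rationals
  let G : ℝ →+ ℝ := AddMonoidHom.mk' g gadd
  have grat : ∀ q : ℚ, g (q : ℝ) = q * c := by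
    intro q
    have := map_ratCast_smul G ℝ ℝ q 1
    simpa [G, smul_eq_mul, g1] using this
  -- g is linear
  have glin : ∀ ζ : ℝ, g ζ = ζ * c := by
    intro ζ
    have hcpos : (0:ℝ) < c + 1 := by linarith
    refine le_antisymm ?_ ?_
    · refine le_of_forall_pos_le_add fun ε hε => ?_
      obtain ⟨q, hq1, hq2⟩ := exists_rat_btwn (lt_add_of_pos_right ζ (div_pos hε hcpos))
      calc g ζ ≤ g q := gmono hq1.le
        _ = q * c := grat q
        _ ≤ (ζ + ε / (c+1)) * c := by nlinarith
        _ ≤ ζ * c + ε := by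
            have : ε / (c+1) * c ≤ ε := by
              rw [div_mul_eq_mul_div, div_le_iff₀ hcpos]; nlinarith
            nlinarith
    · have key : ∀ ε > 0, ζ * c - ε ≤ g ζ := by
        intro ε hε
        obtain ⟨q, hq1, hq2⟩ := exists_rat_btwn (sub_lt_self ζ (div_pos hε hcpos))
        have h1 : (q:ℝ) * c ≤ g ζ := (grat q) ▸ gmono hq2.le
        have h2 : (ζ - ε/(c+1)) * c ≤ q * c := by nlinarith
        have h3 : ζ * c - ε ≤ (ζ - ε/(c+1)) * c := by
          have : ε / (c+1) * c ≤ ε := by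
            rw [div_mul_eq_mul_div, div_le_iff₀ hcpos]; nlinarith
          nlinarith
        linarith
      by_contra h
      push_neg at h
      have := key ((ζ * c - g ζ)/2) (by linarith)
      linarith
  intro ζ
  have : Real.exp (g ζ) = f ζ := Real.exp_log (hpos ζ)
  rw [← this, glin, Real.rpow_def_of_pos hx0, mul_comm]
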